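/- arXiv:0705.4114 — 3 statements merged into one kernel-verified Lean document; each statement's English description precedes it below -/
import Mathlib

section
/- Assume l ≥ 1 and the pair (m_1,…,m_n; l) is separating. Then the composite operator E_{12}∘E_{21} maps the space H_{l−1} of homogeneous polynomials of degree l−1 to itself and is a linear isomorphism of H_{l−1}. -/
noncomputable section

variable {n : ℕ}

/-- ∂/∂x_s as a ℂ-linear endomorphism of ℂ[x_1,…,x_n]. -/
def Dop (n : ℕ) (s : Fin n) : Module.End ℂ (MvPolynomial (Fin n) ℂ) :=
  (MvPolynomial.pderiv s).toLinearMap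

/-- Multiplication by x_s. -/
def Xop (n : ℕ) (s : Fin n) : Module.End ℂ (MvPolynomial (Fin n) ℂ) :=
  LinearMap.mulLeft ℂ (MvPolynomial.X s)

def e11 (m : Fin n → ℂ) (s : Fin n) : Module.End ℂ (MvPolynomial (Fin n) ℂ) :=
  m s • (1 : Module.End ℂ (MvPolynomial (Fin n) ℂ)) - (2:ℂ) • (Xop n s * Dop n s)

def e12 (m : Fin n → ℂ) (s : Fin n) : Module.End ℂ (MvPolynomial (Fin n) ℂ) :=
  m s • Dop n s - Xop n s * Dop n s * Dop n s

def e21 (n : ℕ) (s : Fin n) : Module.End ℂ (MvPolynomial (Fin n) ℂ) := Xop n s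

def E12 (m : Fin n → ℂ) : Module.End ℂ (MvPolynomial (Fin n) ℂ) := ∑ s, e12 m s

def E21 (n : ℕ) : Module.End ℂ (MvPolynomial (Fin n) ℂ) := ∑ s, e21 n s

/-- The matrix of operators e_{ab}^{(s)}. -/
def eMat (m : Fin n → ℂ) (s : Fin n) : Matrix (Fin 2) (Fin 2) (Module.End ℂ (MvPolynomial (Fin n) ℂ)) :=
  !![e11 m s, e12 m s; e21 n s, 0]

def Omega (m : Fin n → ℂ) (s r : Fin n) : Module.End ℂ (MvPolynomial (Fin n) ℂ) :=
  ∑ a : Fin 2, ∑ b : Fin 2, eMat m s a b * eMat m r b a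

/-- The Gaudin Hamiltonian Ĥ_s. -/
def gaudin (m : Fin n → ℂ) (z : Fin n → ℂ) (s : Fin n) :
    Module.End ℂ (MvPolynomial (Fin n) ℂ) :=
  ∑ r ∈ Finset.univ.erase s,
    (z s - z r)⁻¹ • ((m s * m r) • (1 : Module.End ℂ (MvPolynomial (Fin n) ℂ)) - Omega m s r)

/-- The weight space H_l of homogeneous polynomials of degree l. -/
def homog (n l : ℕ) : Submodule ℂ (MvPolynomial (Fin n) ℂ) :=
  MvPolynomial.homogeneousSubmodule (Fin n) ℂ l

/-- The singular weight space S_l. -/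
def singSpace (m : Fin n → ℂ) (l : ℕ) : Submodule ℂ (MvPolynomial (Fin n) ℂ) :=
  homog n l ⊓ LinearMap.ker (E12 m)

/-- The pair (m; l) is separating. -/
def Separating (m : Fin n → ℂ) (l : ℕ) : Prop :=
  ∀ i : ℕ, 1 ≤ i → i ≤ l → (∑ s, m s) - 2 * l + 1 + i ≠ 0

end

/-!
On `H_k` the operators satisfy `E₁₂ E₂₁ = E₂₁ E₁₂ + (∑ m_s - 2k)` (Euler's identity), exactly as for
`sl₂`. If `E₁₂ E₂₁ v = c v` with `v ∈ H_k`, then `E₁₂ v ∈ H_{k-1}` is again an eigenvector, with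
eigenvalue `c - (∑ m_s - 2k)`, and `E₂₁ E₁₂ v` is that multiple of `v`. Descending to `H_0`, where
`E₁₂` vanishes, shows that the eigenvalues of `E₁₂ E₂₁` on `H_k` lie among
`(j + 1) (∑ m_s - 2k + j)`, `0 ≤ j ≤ k`. For `k = l - 1` the separating condition says precisely
that `0` is not one of them, so `E₁₂ E₂₁` is injective, hence bijective, on the
finite-dimensional space `H_{l-1}`.
-/

open MvPolynomial

variable {n : ℕ}

lemma E21_apply (p : MvPolynomial (Fin n) ℂ) : E21 n p = (∑ s, X s) * p := by
  simp [E21, e21, Xop, LinearMap.sum_apply, Finset.sum_mul]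

lemma E12_apply (m : Fin n → ℂ) (p : MvPolynomial (Fin n) ℂ) :
    E12 m p = ∑ s, (m s • pderiv s p - X s * pderiv s (pderiv s p)) := by
  simp [E12, e12, Dop, Xop, LinearMap.sum_apply, Module.End.mul_apply]

namespace MvPolynomial

lemma pderiv_eq_zero_of_isHomogeneous_zero {σ R : Type*} [CommSemiring R] {p : MvPolynomial σ R}
    (hp : p.IsHomogeneous 0) (i : σ) : pderiv i p = 0 := by
  rw [← totalDegree_zero_iff_isHomogeneous, totalDegree_eq_zero_iff_eq_C] at hp
  rw [hp, pderiv_C]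

lemma IsHomogeneous.X_mul_pderiv {σ R : Type*} [CommSemiring R] {p : MvPolynomial σ R} {k : ℕ}
    (hp : p.IsHomogeneous k) (i : σ) : (X i * pderiv i p).IsHomogeneous k := by
  obtain _ | k := k
  · rw [pderiv_eq_zero_of_isHomogeneous_zero hp, mul_zero]
    exact isHomogeneous_zero _ _ _
  · simpa [add_comm] using (isHomogeneous_X R i).mul hp.pderiv

end MvPolynomial

lemma E21_mem_homog {k : ℕ} {p : MvPolynomial (Fin n) ℂ} (hp : p ∈ homog n k) :
    E21 n p ∈ homog n (k + 1) := by
  rw [E21_apply, homog, mem_homogeneousSubmodule, add_comm]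
  exact (IsHomogeneous.sum _ _ _ fun s _ ↦ isHomogeneous_X ℂ s).mul hp

lemma E12_mem_homog (m : Fin n → ℂ) {k : ℕ} {p : MvPolynomial (Fin n) ℂ}
    (hp : p ∈ homog n (k + 1)) : E12 m p ∈ homog n k := by
  have hdp : ∀ s, (pderiv s p).IsHomogeneous k := fun s ↦ by
    simpa using ((mem_homogeneousSubmodule _ _).mp hp).pderiv (i := s)
  rw [E12_apply]
  exact Submodule.sum_mem _ fun s _ ↦ Submodule.sub_mem _
    (Submodule.smul_mem _ _ (hdp s)) ((hdp s).X_mul_pderiv s)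

lemma E12_eq_zero_of_mem_homog_zero (m : Fin n → ℂ) {p : MvPolynomial (Fin n) ℂ}
    (hp : p ∈ homog n 0) : E12 m p = 0 := by
  simp [E12_apply, pderiv_eq_zero_of_isHomogeneous_zero ((mem_homogeneousSubmodule _ _).mp hp)]

lemma E12_E21_apply (m : Fin n → ℂ) (p : MvPolynomial (Fin n) ℂ) :
    E12 m (E21 n p) = E21 n (E12 m p) + (∑ s, m s) • p - (2 : ℂ) • ∑ s, X s * pderiv s p := by
  have hS : ∀ s, pderiv s (∑ t, X t : MvPolynomial (Fin n) ℂ) = 1 := fun s ↦ by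
    classical
    simp [map_sum, pderiv_X, Finset.sum_pi_single']
  simp only [E21_apply, E12_apply, Derivation.leibniz, hS, smul_eq_mul, mul_one, map_add,
    Finset.mul_sum, Finset.sum_smul, Finset.smul_sum, ← Finset.sum_add_distrib,
    ← Finset.sum_sub_distrib, smul_eq_C_mul, map_ofNat]
  refine Finset.sum_congr rfl fun s _ ↦ ?_
  ring

lemma E12_E21_apply_of_mem_homog (m : Fin n → ℂ) {k : ℕ} {p : MvPolynomial (Fin n) ℂ}
    (hp : p ∈ homog n k) :
    E12 m (E21 n p) = E21 n (E12 m p) + (∑ s, m s - 2 * k) • p := by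
  rw [E12_E21_apply, ((mem_homogeneousSubmodule _ _).mp hp).sum_X_mul_pderiv,
    ← Nat.cast_smul_eq_nsmul ℂ, smul_smul, add_sub_assoc, ← sub_smul]

lemma E21_E12_eq_smul (m : Fin n → ℂ) {k : ℕ} {v : MvPolynomial (Fin n) ℂ} (hv : v ∈ homog n k)
    {c : ℂ} (h : E12 m (E21 n v) = c • v) :
    E21 n (E12 m v) = (c - (∑ s, m s - 2 * k)) • v := by
  rw [sub_smul, ← h, E12_E21_apply_of_mem_homog m hv, add_sub_cancel_right]

lemma eq_zero_of_E12_eq_zero (m : Fin n → ℂ) {k : ℕ} {v : MvPolynomial (Fin n) ℂ}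
    (hv : v ∈ homog n k) {c : ℂ} (h : E12 m (E21 n v) = c • v) (hc : c ≠ ∑ s, m s - 2 * k)
    (hE12 : E12 m v = 0) : v = 0 := by
  have hlow := E21_E12_eq_smul m hv h
  rw [hE12, map_zero, eq_comm, smul_eq_zero] at hlow
  exact hlow.resolve_left (sub_ne_zero.mpr hc)

theorem eq_zero_of_E12_E21_eq_smul (m : Fin n → ℂ) {k : ℕ} {v : MvPolynomial (Fin n) ℂ}
    (hv : v ∈ homog n k) {c : ℂ} (hc : ∀ j ≤ k, c ≠ (j + 1) * (∑ s, m s - 2 * k + j))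
    (h : E12 m (E21 n v) = c • v) : v = 0 := by
  have hc₀ : ∀ {k : ℕ} {c : ℂ}, (∀ j ≤ k, c ≠ (j + 1) * (∑ s, m s - 2 * k + j)) →
      c ≠ ∑ s, m s - 2 * k := fun hc ↦ by simpa using hc 0 (Nat.zero_le _)
  induction k generalizing v c with
  | zero => exact eq_zero_of_E12_eq_zero m hv h (hc₀ hc) (E12_eq_zero_of_mem_homog_zero m hv)
  | succ k ih =>
    refine eq_zero_of_E12_eq_zero m hv h (hc₀ hc) (ih (E12_mem_homog m hv)
      (c := c - (∑ s, m s - 2 * (k + 1 : ℕ))) (fun j hj hcj ↦ ?_) ?_)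
    · apply hc (j + 1) (by omega)
      push_cast at hcj ⊢
      linear_combination hcj
    · rw [E21_E12_eq_smul m hv h, map_smul]

lemma Separating.zero_ne_mul {m : Fin n → ℂ} {k : ℕ} (hsep : Separating m (k + 1)) :
    ∀ j ≤ k, (0 : ℂ) ≠ (j + 1) * (∑ s, m s - 2 * k + j) := fun j hj ↦ by
  refine (mul_ne_zero (Nat.cast_add_one_ne_zero j) fun h ↦ ?_).symm
  refine hsep (j + 1) (by omega) (by omega) ?_
  push_cast
  linear_combination h

theorem statement_1_general {n : ℕ} (m : Fin n → ℂ) (l : ℕ) (hl : 1 ≤ l)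
    (hsep : Separating m l) :
    ∃ hmap : ∀ v ∈ homog n (l - 1), (E12 m * E21 n) v ∈ homog n (l - 1),
      Function.Bijective ((E12 m * E21 n).restrict hmap) := by
  obtain ⟨k, rfl⟩ : ∃ k, l = k + 1 := ⟨l - 1, by omega⟩
  rw [Nat.add_sub_cancel]
  have hmap : ∀ v ∈ homog n k, (E12 m * E21 n) v ∈ homog n k :=
    fun v hv ↦ E12_mem_homog m (E21_mem_homog hv)
  have : FiniteDimensional ℂ (homog n k) := Module.Finite.iff_fg.mpr (homogeneousSubmodule_fg _ _ _)
  have hinj : Function.Injective ((E12 m * E21 n).restrict hmap) := by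
    refine (injective_iff_map_eq_zero _).mpr fun v hv ↦ Subtype.ext ?_
    refine eq_zero_of_E12_E21_eq_smul m v.2 hsep.zero_ne_mul ?_
    simpa using congrArg Subtype.val hv
  exact ⟨hmap, hinj, LinearMap.injective_iff_surjective.mp hinj⟩

theorem statement_1 {n : ℕ} (hn : 1 ≤ n) (m : Fin n → ℂ) (l : ℕ) (hl : 1 ≤ l)
    (hsep : Separating m l) :
    ∃ hmap : ∀ v ∈ homog n (l - 1), (E12 m * E21 n) v ∈ homog n (l - 1),
      Function.Bijective ((E12 m * E21 n).restrict hmap) :=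
  statement_1_general m l hl hsep
end

section
/- Let A be a finite-dimensional commutative local ℂ-algebra with maximal ideal m such that the composite ℂ → A → A/m is an isomorphism. Let A* = Hom_ℂ(A,ℂ), for f ∈ A let L_f* : A* → A* be the dual of multiplication by f (i.e. (L_f*g)(x) = g(fx)), and let ann(m) = {g ∈ A* : g(x) = 0 for all x ∈ m} (a one-dimensional subspace). Then: (i) L_f*(ann(m)) ⊆ ann(m) for every f ∈ A; and (ii) every nonzero vector subspace W ⊆ A* that is invariant under L_f* for all f ∈ A contains ann(m). -/
theorem statement_8 (A : Type*) [CommRing A] [Algebra ℂ A] [FiniteDimensional ℂ A]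
    [IsLocalRing A]
    (hres : Function.Bijective
      ((IsLocalRing.residue A).comp (algebraMap ℂ A))) :
    (∀ (f : A) (g : Module.Dual ℂ A),
      (∀ x ∈ IsLocalRing.maximalIdeal A, g x = 0) →
      ∀ x ∈ IsLocalRing.maximalIdeal A, g.comp (LinearMap.mulLeft ℂ f) x = 0) ∧
    (∀ W : Submodule ℂ (Module.Dual ℂ A), W ≠ ⊥ →
      (∀ (f : A), ∀ g ∈ W, g.comp (LinearMap.mulLeft ℂ f) ∈ W) →
      ∀ g : Module.Dual ℂ A,
        (∀ x ∈ IsLocalRing.maximalIdeal A, g x = 0) → g ∈ W) := by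
  classical
  set m := IsLocalRing.maximalIdeal A with hm
  have hmem : ∀ a : A, ∃ c : ℂ, a - algebraMap ℂ A c ∈ m := by
    intro a
    obtain ⟨c, hc⟩ := hres.2 (IsLocalRing.residue A a)
    refine ⟨c, ?_⟩
    rw [hm, ← Ideal.Quotient.eq_zero_iff_mem, map_sub]
    simp only [RingHom.comp_apply] at hc
    exact sub_eq_zero_of_eq hc.symm
  constructor
  · intro f g hg x hx
    simpa using hg (f * x) (Ideal.mul_mem_left _ f hx)
  · intro W hW hinv g0 hg0
    obtain ⟨g, hgW, hgne⟩ := (Submodule.ne_bot_iff W).mp hW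
    -- m is nilpotent
    have hart : IsArtinianRing A := isArtinian_of_tower ℂ inferInstance
    obtain ⟨n, hn⟩ := IsArtinianRing.isNilpotent_jacobson_bot (R := A)
    rw [IsLocalRing.jacobson_eq_maximalIdeal ⊥ bot_ne_top] at hn
    -- find least k with g vanishing on m^k
    have hPn : ∀ y ∈ m ^ n, g y = 0 := by
      intro y hy
      have : y = 0 := by rw [hm, hn] at hy; simpa using hy
      rw [this, map_zero]
    have hex : ∃ k, ∀ y ∈ m ^ k, g y = 0 := ⟨n, hPn⟩
    set k := Nat.find hex with hk
    have hPk : ∀ y ∈ m ^ k, g y = 0 := Nat.find_spec hex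
    have hk0 : k ≠ 0 := by
      intro h
      apply hgne
      ext a
      have := hPk a (by rw [h, pow_zero, Ideal.one_eq_top]; trivial)
      simpa using this
    have hlt : ¬ ∀ y ∈ m ^ (k - 1), g y = 0 :=
      Nat.find_min hex (Nat.sub_lt (Nat.pos_of_ne_zero hk0) one_pos)
    push_neg at hlt
    obtain ⟨f, hf, hgf⟩ := hlt
    set h : Module.Dual ℂ A := g.comp (LinearMap.mulLeft ℂ f) with hh
    have hhW : h ∈ W := hinv f g hgW
    have hh1 : h 1 = g f := by simp [hh]
    have hhm : ∀ x ∈ m, h x = 0 := by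
      intro x hx
      have : f * x ∈ m ^ k := by
        have : f * x ∈ m ^ (k - 1) * m := Ideal.mul_mem_mul hf hx
        rwa [← pow_succ, Nat.sub_add_cancel (Nat.one_le_iff_ne_zero.mpr hk0)] at this
      simpa [hh] using hPk (f * x) this
    have hh1ne : h 1 ≠ 0 := by rw [hh1]; exact hgf
    -- g0 = (g0 1 / h 1) • h
    have : g0 = (g0 1 / h 1) • h := by
      ext a
      obtain ⟨c, hc⟩ := hmem a
      have ha : a = algebraMap ℂ A c + (a - algebraMap ℂ A c) := by ring
      have e1 : g0 a = c * g0 1 := by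
        rw [ha, map_add, hg0 _ hc, add_zero, Algebra.algebraMap_eq_smul_one, map_smul,
          smul_eq_mul]
      have e2 : h a = c * h 1 := by
        rw [ha, map_add, hhm _ hc, add_zero, Algebra.algebraMap_eq_smul_one, map_smul,
          smul_eq_mul]
      rw [e1]
      simp only [LinearMap.smul_apply, smul_eq_mul, e2]
      field_simp
    rw [this]
    exact W.smul_mem _ hhW
end

section
/- Let z_1,…,z_n be distinct complex numbers, m_1,…,m_n positive integers, c a nonzero complex number, and f,g ∈ ℂ[x] polynomials with Wronskian f'g − fg' = c·∏_{s=1}^n (x−z_s)^{m_s}. Assume that for each s at least one of f(z_s), g(z_s) is nonzero. Then ∏_{s=1}^n (x−z_s)^{m_s−1} divides both f''g − fg'' and f''g' − f'g'' in ℂ[x]. -/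
/-!
With `W = g f' - g' f` (Mathlib's `wronskian g f`, the Wronskian of the statement), one has
`W' = f'' g - f g''`, so the first divisibility is the fact that differentiating lowers the
multiplicity of each root `z_s` of `W` by at most one. For the second, the second Wronskian
`V = g' f'' - g'' f'` satisfies `f V = f' W' - f'' W` and `g V = g' W' - g'' W`; both right-hand
sides are divisible by `(x - z_s)^(m_s - 1)`, and one of `f`, `g` does not vanish at `z_s`.
Coprimality of the factors for distinct `z_s` assembles the local statements.
-/

open Polynomial

namespace Polynomial

section CommRing

variable {R : Type*} [CommRing R]

theorem derivative_wronskian (a b : R[X]) :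
    derivative (wronskian a b) =
      a * derivative (derivative b) - derivative (derivative a) * b := by
  simp only [wronskian, derivative_sub, derivative_mul]
  ring

theorem mul_wronskian_derivative_left (a b : R[X]) :
    a * wronskian (derivative a) (derivative b) =
      derivative a * derivative (wronskian a b) - derivative (derivative a) * wronskian a b := by
  rw [derivative_wronskian, wronskian, wronskian]
  ring

theorem mul_wronskian_derivative_right (a b : R[X]) :
    b * wronskian (derivative a) (derivative b) =
      derivative b * derivative (wronskian a b) - derivative (derivative b) * wronskian a b := by
  rw [derivative_wronskian, wronskian, wronskian]
  ring

theorem pow_sub_one_dvd_mul_wronskian_derivative {p a b u : R[X]} {k : ℕ}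
    (hk : p ^ k ∣ wronskian a b) (hu : u = a ∨ u = b) :
    p ^ (k - 1) ∣ u * wronskian (derivative a) (derivative b) := by
  have hW : p ^ (k - 1) ∣ wronskian a b := (pow_dvd_pow p (k.sub_le 1)).trans hk
  have hW' : p ^ (k - 1) ∣ derivative (wronskian a b) := pow_sub_one_dvd_derivative_of_pow_dvd hk
  rcases hu with rfl | rfl
  · rw [mul_wronskian_derivative_left]
    exact dvd_sub (hW'.mul_left _) (hW.mul_left _)
  · rw [mul_wronskian_derivative_right]
    exact dvd_sub (hW'.mul_left _) (hW.mul_left _)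

theorem pow_sub_one_dvd_wronskian_derivative [IsDomain R] {p a b : R[X]} {k : ℕ} (hp : Prime p)
    (hk : p ^ k ∣ wronskian a b) (hab : ¬p ∣ a ∨ ¬p ∣ b) :
    p ^ (k - 1) ∣ wronskian (derivative a) (derivative b) := by
  rcases hab with ha | hb
  · exact hp.pow_dvd_of_dvd_mul_left _ ha (pow_sub_one_dvd_mul_wronskian_derivative hk (.inl rfl))
  · exact hp.pow_dvd_of_dvd_mul_left _ hb (pow_sub_one_dvd_mul_wronskian_derivative hk (.inr rfl))

end CommRing

theorem prod_X_sub_C_pow_dvd_of_forall {K ι : Type*} [Field K] [Fintype ι] {z : ι → K}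
    (hz : Function.Injective z) (k : ι → ℕ) {q : K[X]} (h : ∀ s, (X - C (z s)) ^ k s ∣ q) :
    (∏ s, (X - C (z s)) ^ k s) ∣ q :=
  Fintype.prod_dvd_of_coprime (fun _ _ hst => (pairwise_coprime_X_sub_C hz hst).pow) h

end Polynomial

theorem statement_14_general {n : ℕ} (z : Fin n → ℂ) (hz : Function.Injective z)
    (m : Fin n → ℕ) (c : ℂ)
    (f g : Polynomial ℂ)
    (hWr : Polynomial.derivative f * g - f * Polynomial.derivative g =
      Polynomial.C c * ∏ s, (Polynomial.X - Polynomial.C (z s)) ^ m s)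
    (hnv : ∀ s, f.eval (z s) ≠ 0 ∨ g.eval (z s) ≠ 0) :
    (∏ s, (Polynomial.X - Polynomial.C (z s)) ^ (m s - 1)) ∣
      (Polynomial.derivative (Polynomial.derivative f) * g -
        f * Polynomial.derivative (Polynomial.derivative g)) ∧
    (∏ s, (Polynomial.X - Polynomial.C (z s)) ^ (m s - 1)) ∣
      (Polynomial.derivative (Polynomial.derivative f) * Polynomial.derivative g -
        Polynomial.derivative f * Polynomial.derivative (Polynomial.derivative g)) := by
  have hW : wronskian g f = C c * ∏ s, (X - C (z s)) ^ m s := by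
    rw [← hWr, wronskian]
    ring
  have hdvdW (s : Fin n) : (X - C (z s)) ^ m s ∣ wronskian g f :=
    hW ▸ (Finset.dvd_prod_of_mem _ (Finset.mem_univ s)).mul_left _
  constructor
  · rw [show derivative (derivative f) * g - f * derivative (derivative g) =
      derivative (wronskian g f) by rw [derivative_wronskian]; ring]
    exact prod_X_sub_C_pow_dvd_of_forall hz _ fun s =>
      pow_sub_one_dvd_derivative_of_pow_dvd (hdvdW s)
  · rw [show derivative (derivative f) * derivative g - derivative f * derivative (derivative g) =
      wronskian (derivative g) (derivative f) by rw [wronskian]; ring]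
    refine prod_X_sub_C_pow_dvd_of_forall hz _ fun s =>
      pow_sub_one_dvd_wronskian_derivative (prime_X_sub_C _) (hdvdW s) ?_
    rw [dvd_iff_isRoot, dvd_iff_isRoot]
    exact (hnv s).symm

theorem statement_14 {n : ℕ} (hn : 1 ≤ n) (z : Fin n → ℂ) (hz : Function.Injective z)
    (m : Fin n → ℕ) (hm : ∀ s, 0 < m s) (c : ℂ) (hc : c ≠ 0)
    (f g : Polynomial ℂ)
    (hWr : Polynomial.derivative f * g - f * Polynomial.derivative g =
      Polynomial.C c * ∏ s, (Polynomial.X - Polynomial.C (z s)) ^ m s)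
    (hnv : ∀ s, f.eval (z s) ≠ 0 ∨ g.eval (z s) ≠ 0) :
    (∏ s, (Polynomial.X - Polynomial.C (z s)) ^ (m s - 1)) ∣
      (Polynomial.derivative (Polynomial.derivative f) * g -
        f * Polynomial.derivative (Polynomial.derivative g)) ∧
    (∏ s, (Polynomial.X - Polynomial.C (z s)) ^ (m s - 1)) ∣
      (Polynomial.derivative (Polynomial.derivative f) * Polynomial.derivative g -
        Polynomial.derivative f * Polynomial.derivative (Polynomial.derivative g)) :=
  statement_14_general z hz m c f g hWr hnv
end
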